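/- arXiv:1307.7652 — 3 statements merged into one kernel-verified Lean document; each statement's English description precedes it below -/
import Mathlib

section
/- Any two vertices of a tree are linearly equivalent as divisors: for a tree T and vertices v, w, the divisors v and w differ by an element of the image of the Laplacian of T. -/
/-!
Across an edge `vw` of a tree, let `S` be the side of `v`, i.e. the vertices still reachable from
`v` once `vw` is deleted. Since `vw` is the only edge leaving `S`, the Laplacian sends the
indicator of `S` to `v - w`. Summing these along the path from `v` to `w` gives the theorem.
-/

open Finset Matrix

namespace SimpleGraph

variable {V R : Type*} [Fintype V] [DecidableEq V] (G : SimpleGraph V) [DecidableRel G.Adj]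

theorem lapMatrix_mulVec_apply_eq_sum_sub [NonAssocRing R] (f : V → R) (u : V) :
    (G.lapMatrix R *ᵥ f) u = ∑ x ∈ G.neighborFinset u, (f u - f x) := by
  rw [lapMatrix_mulVec_apply, sum_sub_distrib, sum_const, card_neighborFinset_eq_degree,
    nsmul_eq_mul]

theorem lapMatrix_mulVec_indicator_of_unique_crossing [NonAssocRing R] {S : Set V} {v w : V}
    (hvw : G.Adj v w) (hv : v ∈ S) (hw : w ∉ S)
    (hcross : ∀ x y, G.Adj x y → x ∈ S → y ∉ S → x = v ∧ y = w) :
    G.lapMatrix R *ᵥ S.indicator 1 = Pi.single v 1 - Pi.single w 1 := by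
  ext u
  rw [lapMatrix_mulVec_apply_eq_sum_sub]
  by_cases huv : u = v
  · rw [huv, sum_eq_single_of_mem w ((G.mem_neighborFinset v w).mpr hvw)]
    · simp [hv, hw, hvw.ne]
    · intro x hx hxw
      have hxS : x ∈ S :=
        by_contra fun h ↦ hxw (hcross _ _ ((G.mem_neighborFinset v x).mp hx) hv h).2
      simp [hv, hxS]
  by_cases huw : u = w
  · rw [huw, sum_eq_single_of_mem v ((G.mem_neighborFinset w v).mpr hvw.symm)]
    · simp [hv, hw, hvw.ne]
    · intro x hx hxv
      have hxS : x ∉ S :=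
        fun h ↦ hxv (hcross _ _ ((G.mem_neighborFinset w x).mp hx).symm h hw).1
      simp [hw, hxS]
  rw [sum_eq_zero, Pi.sub_apply, Pi.single_eq_of_ne huv, Pi.single_eq_of_ne huw, sub_zero]
  intro x hx
  have hux : G.Adj u x := (G.mem_neighborFinset u x).mp hx
  by_cases hu : u ∈ S <;> by_cases hxS : x ∈ S
  · simp [hu, hxS]
  · exact absurd (hcross _ _ hux hu hxS).1 huv
  · exact absurd (hcross _ _ hux.symm hxS hu).2 huw
  · simp [hu, hxS]

theorem single_sub_single_mem_range_lapMatrix_of_isBridge [CommRing R] {v w : V}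
    (hvw : G.Adj v w) (hb : G.IsBridge s(v, w)) :
    Pi.single v 1 - Pi.single w 1 ∈ LinearMap.range (G.lapMatrix R).mulVecLin := by
  set H := G.deleteEdges {s(v, w)}
  refine ⟨{u | H.Reachable v u}.indicator 1,
    lapMatrix_mulVec_indicator_of_unique_crossing G hvw (Reachable.refl v) (isBridge_iff.mp hb) ?_⟩
  intro x y hxy hx hy
  have hedge : s(x, y) = s(v, w) :=
    by_contra fun h ↦
      hy (hx.trans (deleteEdges_adj.mpr ⟨hxy, by simpa using h⟩).reachable)
  rcases Sym2.eq_iff.mp hedge with h | ⟨rfl, -⟩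
  · exact h
  · exact absurd hx (isBridge_iff.mp hb)

theorem single_sub_single_mem_range_lapMatrix_of_reachable [CommRing R] (hG : G.IsAcyclic)
    {v w : V} (h : G.Reachable v w) :
    Pi.single v 1 - Pi.single w 1 ∈ LinearMap.range (G.lapMatrix R).mulVecLin := by
  obtain ⟨p⟩ := h
  induction p with
  | nil => simp
  | cons hab _ ih =>
    simpa using add_mem (single_sub_single_mem_range_lapMatrix_of_isBridge G hab
      (isAcyclic_iff_forall_adj_isBridge.mp hG hab)) ih

end SimpleGraph

/-- Any two vertices of a tree are linearly equivalent as divisors: the difference of the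
corresponding chip configurations lies in the image of the graph Laplacian. -/
theorem stmt4 {V : Type} [Fintype V] [DecidableEq V] (G : SimpleGraph V) [DecidableRel G.Adj]
    (ht : G.IsTree) (v w : V) :
    ∃ f : V → ℤ,
      (fun u => (if u = v then (1 : ℤ) else 0) - if u = w then 1 else 0)
        = (G.lapMatrix ℤ).mulVec f := by
  obtain ⟨f, hf⟩ :=
    G.single_sub_single_mem_range_lapMatrix_of_reachable (R := ℤ) ht.isAcyclic (ht.connected v w)
  refine ⟨f, ?_⟩
  rw [← mulVecLin_apply, hf]
  ext u
  simp [Pi.single_apply]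
end

section
/- The tetrahedron K_4 has no divisor of degree 2 and rank at least 1; that is, K_4 (genus 3) is not hyperelliptic. -/
open Finset

/-- The Laplacian of a multigraph with edge multiplicities `m`, applied to `f`. -/
def lap {V : Type} [Fintype V] (m : V → V → ℕ) (f : V → ℤ) : V → ℤ :=
  fun v => (∑ w, (m v w : ℤ)) * f v - ∑ w, (m v w : ℤ) * f w

/-- Linear equivalence of divisors: the difference lies in the image of the Laplacian. -/
def LinEquiv {V : Type} [Fintype V] (m : V → V → ℕ) (D D' : V → ℤ) : Prop :=
  ∃ f : V → ℤ, ∀ v, D v - D' v = lap m f v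

/-- An effective divisor has nonnegative value at every vertex. -/
def Effective {V : Type} (D : V → ℤ) : Prop := ∀ v, 0 ≤ D v

/-- The degree of a divisor. -/
def divDeg {V : Type} [Fintype V] (D : V → ℤ) : ℤ := ∑ v, D v

/-- The divisor `D` has rank at least `r`: for every effective divisor `E` of degree `r`,
`D - E` is linearly equivalent to an effective divisor. -/
def RankGe {V : Type} [Fintype V] (m : V → V → ℕ) (D : V → ℤ) (r : ℕ) : Prop :=
  ∀ E : V → ℤ, Effective E → divDeg E = r →
    ∃ D' : V → ℤ, Effective D' ∧ LinEquiv m (fun v => D v - E v) D'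

/-- The single chip at `v`, as a divisor. -/
def δ {V : Type} [DecidableEq V] (v u : V) : ℤ := if u = v then 1 else 0

/-- The complete graph `K_4` (the tetrahedron). -/
def mK4 : Fin 4 → Fin 4 → ℕ := fun i j => if i = j then 0 else 1


lemma lapK4 (f : Fin 4 → ℤ) (v : Fin 4) :
    lap mK4 f v = 4 * f v - ∑ w, f w := by
  fin_cases v <;> simp [lap, mK4, Fin.sum_univ_four] <;> ring

set_option maxRecDepth 4000 in
lemma key : ¬ ∃ a : Fin 4 → ZMod 4, ∀ w : Fin 4, ∃ u : Fin 4, ∃ c : ZMod 4,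
    ∀ v, a v = c + (if v = w then 1 else 0) + (if v = u then 1 else 0) := by
  decide

lemma eff_deg_one (E : Fin 4 → ℤ) (hE : Effective E) (hd : divDeg E = 1) :
    ∃ u : Fin 4, ∀ v, E v = δ u v := by
  have h0 := hE 0; have h1 := hE 1; have h2 := hE 2; have h3 := hE 3
  have hs : E 0 + E 1 + E 2 + E 3 = 1 := by
    simpa [divDeg, Fin.sum_univ_four] using hd
  have : (E 0 = 1 ∧ E 1 = 0 ∧ E 2 = 0 ∧ E 3 = 0) ∨
         (E 0 = 0 ∧ E 1 = 1 ∧ E 2 = 0 ∧ E 3 = 0) ∨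
         (E 0 = 0 ∧ E 1 = 0 ∧ E 2 = 1 ∧ E 3 = 0) ∨
         (E 0 = 0 ∧ E 1 = 0 ∧ E 2 = 0 ∧ E 3 = 1) := by omega
  rcases this with h | h | h | h
  · exact ⟨0, by intro v; fin_cases v <;> simp [δ] <;> omega⟩
  · exact ⟨1, by intro v; fin_cases v <;> simp [δ] <;> omega⟩
  · exact ⟨2, by intro v; fin_cases v <;> simp [δ] <;> omega⟩
  · exact ⟨3, by intro v; fin_cases v <;> simp [δ] <;> omega⟩

/-- The tetrahedron `K_4` has no divisor of degree 2 and rank at least 1;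
that is, `K_4` is not hyperelliptic. -/
theorem stmt16 :
    ¬ ∃ D : Fin 4 → ℤ, divDeg D = 2 ∧ RankGe mK4 D 1 := by
  rintro ⟨D, hdeg, hrank⟩
  apply key
  refine ⟨fun v => (D v : ZMod 4), fun w => ?_⟩
  obtain ⟨D', hD'eff, f, hf⟩ := hrank (δ w) (fun v => by simp [δ]; split <;> omega)
    (by simp [divDeg, δ, Finset.sum_ite_eq])
  have hfs : ∀ v, D v - δ w v - D' v = 4 * f v - ∑ x, f x := by
    intro v; have := hf v; dsimp only at this; rw [lapK4] at this; linarith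
  have hdegD' : divDeg D' = 1 := by
    have h0 := hfs 0; have h1 := hfs 1; have h2 := hfs 2; have h3 := hfs 3
    have hs : D 0 + D 1 + D 2 + D 3 = 2 := by simpa [divDeg, Fin.sum_univ_four] using hdeg
    have hw : δ w 0 + δ w 1 + δ w 2 + δ w 3 = 1 := by
      fin_cases w <;> simp [δ, Fin.sum_univ_four]
    simp only [divDeg, Fin.sum_univ_four] at *
    omega
  obtain ⟨u, hu⟩ := eff_deg_one D' hD'eff hdegD'
  refine ⟨u, -(∑ x, (f x : ZMod 4)), fun v => ?_⟩
  have h := hfs v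
  rw [hu v] at h
  have : (D v : ZMod 4) - (δ w v : ZMod 4) - (δ u v : ZMod 4)
      = 4 * (f v : ZMod 4) - ∑ x, (f x : ZMod 4) := by
    have := congrArg (fun n : ℤ => (n : ZMod 4)) h
    push_cast at this ⊢
    simpa using this
  have h4 : (4 : ZMod 4) = 0 := by decide
  rw [h4, zero_mul, zero_sub] at this
  have hδw : ((δ w v : ℤ) : ZMod 4) = (if v = w then 1 else 0) := by
    simp [δ]
  have hδu : ((δ u v : ℤ) : ZMod 4) = (if v = u then 1 else 0) := by
    simp [δ]
  rw [hδw, hδu] at this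
  linear_combination this
end

section
/- The complete bipartite graph K_{3,3} has no divisor of degree 2 and rank at least 1; that is, K_{3,3} (genus 4) is not hyperelliptic. -/
open Finset

/-- The complete bipartite graph `K_{3,3}`, with parts `{0,1,2}` and `{3,4,5}`. -/
def mK33 : Fin 6 → Fin 6 → ℕ := fun i j =>
  if (i.val < 3 ∧ 3 ≤ j.val) ∨ (j.val < 3 ∧ 3 ≤ i.val) then 1 else 0

lemma case0 (D0 D1 D2 D3 D4 D5 e0 e1 e2 e3 e4 e5 : ℤ)
    (h0 : 0 ≤ e0) (h1 : 0 ≤ e1) (h2 : 0 ≤ e2) (h3 : 0 ≤ e3) (h4 : 0 ≤ e4) (h5 : 0 ≤ e5)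
    (hs : e0 + e1 + e2 + e3 + e4 + e5 = 1)
    (d1 : 3 ∣ (D0 - 1 - e0) - (D1 - 0 - e1))
    (d2 : 3 ∣ (D0 - 1 - e0) - (D2 - 0 - e2))
    (d3 : 3 ∣ (D3 - 0 - e3) - (D4 - 0 - e4))
    (d4 : 3 ∣ (D3 - 0 - e3) - (D5 - 0 - e5)) :
    (3 ∣ D3 - D4 ∧ 3 ∣ D3 - D5) ∨ (3 ∣ D0 - D1 - 1 ∧ 3 ∣ D0 - D2 - 1) := by
  rcases (show e0 = 0 ∨ e0 = 1 by omega) with h|h <;> subst h <;>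
  rcases (show e1 = 0 ∨ e1 = 1 by omega) with h|h <;> subst h <;>
  rcases (show e2 = 0 ∨ e2 = 1 by omega) with h|h <;> subst h <;>
  rcases (show e3 = 0 ∨ e3 = 1 by omega) with h|h <;> subst h <;>
  rcases (show e4 = 0 ∨ e4 = 1 by omega) with h|h <;> subst h <;>
  rcases (show e5 = 0 ∨ e5 = 1 by omega) with h|h <;> subst h <;> omega

lemma case1 (D0 D1 D2 D3 D4 D5 e0 e1 e2 e3 e4 e5 : ℤ)
    (h0 : 0 ≤ e0) (h1 : 0 ≤ e1) (h2 : 0 ≤ e2) (h3 : 0 ≤ e3) (h4 : 0 ≤ e4) (h5 : 0 ≤ e5)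
    (hs : e0 + e1 + e2 + e3 + e4 + e5 = 1)
    (d1 : 3 ∣ (D0 - 0 - e0) - (D1 - 1 - e1))
    (d2 : 3 ∣ (D0 - 0 - e0) - (D2 - 0 - e2))
    (d3 : 3 ∣ (D3 - 0 - e3) - (D4 - 0 - e4))
    (d4 : 3 ∣ (D3 - 0 - e3) - (D5 - 0 - e5)) :
    (3 ∣ D3 - D4 ∧ 3 ∣ D3 - D5) ∨ 3 ∣ D0 - D1 + 1 := by
  rcases (show e0 = 0 ∨ e0 = 1 by omega) with h|h <;> subst h <;>
  rcases (show e1 = 0 ∨ e1 = 1 by omega) with h|h <;> subst h <;>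
  rcases (show e2 = 0 ∨ e2 = 1 by omega) with h|h <;> subst h <;>
  rcases (show e3 = 0 ∨ e3 = 1 by omega) with h|h <;> subst h <;>
  rcases (show e4 = 0 ∨ e4 = 1 by omega) with h|h <;> subst h <;>
  rcases (show e5 = 0 ∨ e5 = 1 by omega) with h|h <;> subst h <;> omega

lemma case3 (D0 D1 D2 D3 D4 D5 e0 e1 e2 e3 e4 e5 : ℤ)
    (h0 : 0 ≤ e0) (h1 : 0 ≤ e1) (h2 : 0 ≤ e2) (h3 : 0 ≤ e3) (h4 : 0 ≤ e4) (h5 : 0 ≤ e5)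
    (hs : e0 + e1 + e2 + e3 + e4 + e5 = 1)
    (d1 : 3 ∣ (D0 - 0 - e0) - (D1 - 0 - e1))
    (d2 : 3 ∣ (D0 - 0 - e0) - (D2 - 0 - e2))
    (d3 : 3 ∣ (D3 - 1 - e3) - (D4 - 0 - e4))
    (d4 : 3 ∣ (D3 - 1 - e3) - (D5 - 0 - e5)) :
    ¬(3 ∣ D3 - D4 ∧ 3 ∣ D3 - D5) := by
  rcases (show e0 = 0 ∨ e0 = 1 by omega) with h|h <;> subst h <;>
  rcases (show e1 = 0 ∨ e1 = 1 by omega) with h|h <;> subst h <;>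
  rcases (show e2 = 0 ∨ e2 = 1 by omega) with h|h <;> subst h <;>
  rcases (show e3 = 0 ∨ e3 = 1 by omega) with h|h <;> subst h <;>
  rcases (show e4 = 0 ∨ e4 = 1 by omega) with h|h <;> subst h <;>
  rcases (show e5 = 0 ∨ e5 = 1 by omega) with h|h <;> subst h <;> omega


lemma lap_eval (f : Fin 6 → ℤ) :
    lap mK33 f 0 = 3 * f 0 - (f 3 + f 4 + f 5) ∧
    lap mK33 f 1 = 3 * f 1 - (f 3 + f 4 + f 5) ∧
    lap mK33 f 2 = 3 * f 2 - (f 3 + f 4 + f 5) ∧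
    lap mK33 f 3 = 3 * f 3 - (f 0 + f 1 + f 2) ∧
    lap mK33 f 4 = 3 * f 4 - (f 0 + f 1 + f 2) ∧
    lap mK33 f 5 = 3 * f 5 - (f 0 + f 1 + f 2) := by
  refine ⟨?_, ?_, ?_, ?_, ?_, ?_⟩ <;>
  · simp only [lap, Fin.sum_univ_six]
    norm_num [mK33, show ((0:Fin 6):ℕ)=0 from rfl, show ((1:Fin 6):ℕ)=1 from rfl,
      show ((2:Fin 6):ℕ)=2 from rfl, show ((3:Fin 6):ℕ)=3 from rfl,
      show ((4:Fin 6):ℕ)=4 from rfl, show ((5:Fin 6):ℕ)=5 from rfl]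

lemma delta_eff (w : Fin 6) : Effective (δ w) := by
  intro u; unfold δ; split <;> norm_num

lemma delta_deg (w : Fin 6) : divDeg (δ w) = (1 : ℕ) := by
  fin_cases w <;> simp [divDeg, δ, Fin.sum_univ_six]

lemma key_s17 (D : Fin 6 → ℤ) (hdeg : divDeg D = 2) (hr : RankGe mK33 D 1) (w : Fin 6) :
    ∃ e : Fin 6 → ℤ, (0 ≤ e 0 ∧ 0 ≤ e 1 ∧ 0 ≤ e 2 ∧ 0 ≤ e 3 ∧ 0 ≤ e 4 ∧ 0 ≤ e 5) ∧
      (e 0 + e 1 + e 2 + e 3 + e 4 + e 5 = 1) ∧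
      (3 ∣ (D 0 - δ w 0 - e 0) - (D 1 - δ w 1 - e 1)) ∧
      (3 ∣ (D 0 - δ w 0 - e 0) - (D 2 - δ w 2 - e 2)) ∧
      (3 ∣ (D 3 - δ w 3 - e 3) - (D 4 - δ w 4 - e 4)) ∧
      (3 ∣ (D 3 - δ w 3 - e 3) - (D 5 - δ w 5 - e 5)) := by
  obtain ⟨D', hEff, f, hf⟩ := hr (δ w) (delta_eff w) (delta_deg w)
  obtain ⟨l0, l1, l2, l3, l4, l5⟩ := lap_eval f
  have h0 := hf 0; have h1 := hf 1; have h2 := hf 2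
  have h3 := hf 3; have h4 := hf 4; have h5 := hf 5
  rw [l0] at h0; rw [l1] at h1; rw [l2] at h2
  rw [l3] at h3; rw [l4] at h4; rw [l5] at h5
  simp only at h0 h1 h2 h3 h4 h5
  have hD : D 0 + D 1 + D 2 + D 3 + D 4 + D 5 = 2 := by
    simpa [divDeg, Fin.sum_univ_six] using hdeg
  have hδ : δ w 0 + δ w 1 + δ w 2 + δ w 3 + δ w 4 + δ w 5 = 1 := by
    fin_cases w <;> simp [δ]
  exact ⟨D', ⟨hEff 0, hEff 1, hEff 2, hEff 3, hEff 4, hEff 5⟩, by omega, by omega,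
    by omega, by omega, by omega⟩

set_option maxHeartbeats 1000000 in
/-- The complete bipartite graph `K_{3,3}` has no divisor of degree 2 and rank at least 1;
that is, `K_{3,3}` is not hyperelliptic. -/
theorem stmt17 :
    ¬ ∃ D : Fin 6 → ℤ, divDeg D = 2 ∧ RankGe mK33 D 1 := by
  rintro ⟨D, hdeg, hr⟩
  obtain ⟨a, ⟨a0, a1, a2, a3, a4, a5⟩, as, ha1, ha2, ha3, ha4⟩ := key_s17 D hdeg hr 0
  obtain ⟨b, ⟨b0, b1, b2, b3, b4, b5⟩, bs, hb1, hb2, hb3, hb4⟩ := key_s17 D hdeg hr 1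
  obtain ⟨c, ⟨c0, c1, c2, c3, c4, c5⟩, cs, hc1, hc2, hc3, hc4⟩ := key_s17 D hdeg hr 3
  simp only [show δ (0:Fin 6) 0 = 1 from rfl, show δ (0:Fin 6) 1 = 0 from rfl,
    show δ (0:Fin 6) 2 = 0 from rfl, show δ (0:Fin 6) 3 = 0 from rfl,
    show δ (0:Fin 6) 4 = 0 from rfl, show δ (0:Fin 6) 5 = 0 from rfl] at ha1 ha2 ha3 ha4
  simp only [show δ (1:Fin 6) 0 = 0 from rfl, show δ (1:Fin 6) 1 = 1 from rfl,
    show δ (1:Fin 6) 2 = 0 from rfl, show δ (1:Fin 6) 3 = 0 from rfl,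
    show δ (1:Fin 6) 4 = 0 from rfl, show δ (1:Fin 6) 5 = 0 from rfl] at hb1 hb2 hb3 hb4
  simp only [show δ (3:Fin 6) 0 = 0 from rfl, show δ (3:Fin 6) 1 = 0 from rfl,
    show δ (3:Fin 6) 2 = 0 from rfl, show δ (3:Fin 6) 3 = 1 from rfl,
    show δ (3:Fin 6) 4 = 0 from rfl, show δ (3:Fin 6) 5 = 0 from rfl] at hc1 hc2 hc3 hc4
  have F0 := case0 (D 0) (D 1) (D 2) (D 3) (D 4) (D 5) (a 0) (a 1) (a 2) (a 3) (a 4) (a 5)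
    a0 a1 a2 a3 a4 a5 as ha1 ha2 ha3 ha4
  have F1 := case1 (D 0) (D 1) (D 2) (D 3) (D 4) (D 5) (b 0) (b 1) (b 2) (b 3) (b 4) (b 5)
    b0 b1 b2 b3 b4 b5 bs hb1 hb2 hb3 hb4
  have F3 := case3 (D 0) (D 1) (D 2) (D 3) (D 4) (D 5) (c 0) (c 1) (c 2) (c 3) (c 4) (c 5)
    c0 c1 c2 c3 c4 c5 cs hc1 hc2 hc3 hc4
  rcases F0 with ⟨Fc, Fd⟩ | ⟨Fa, Fb⟩
  · exact F3 ⟨Fc, Fd⟩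
  rcases F1 with ⟨Fc, Fd⟩ | Fa'
  · exact F3 ⟨Fc, Fd⟩
  omega
end
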